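/- Let E be an n₁×n₂ random matrix with i.i.d. mean-zero Gaussian entries of variance σ². For deterministic A ∈ ℝ^{n₂×n₁}, B ∈ ℝ^{n₂×n₁}, C ∈ ℝ^{n₂×n₁}, one has E[E A E B E C E] = σ⁴ Aᵀ B Cᵀ + σ⁴ Trace(A Cᵀ) Bᵀ + σ⁴ Cᵀ B Aᵀ. -/

import Mathlib

/-!
Expanding the entries, `(E A E B E C E)ᵢⱼ` is a linear combination of products of four entries
of `E`. For independent centred Gaussians, `𝔼[X_p X_q X_r X_s]` vanishes as soon as one index
occurs only once, and otherwise equals `v²` times the number of ways to split `(p, q, r, s)` into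
two pairs of equal indices (the fourth moment `3v²` accounts for the three splittings when all
indices agree). Each of the three pairings contracts the indices of `A`, `B`, `C` into one of the
three matrix terms.
-/

open Matrix MeasureTheory ProbabilityTheory
open scoped NNReal

lemma integral_sq_gaussianReal (v : ℝ≥0) : ∫ x, x ^ 2 ∂gaussianReal 0 v = v := by
  simpa [variance_eq_integral measurable_id'.aemeasurable] using
    variance_fun_id_gaussianReal (μ := 0) (v := v)

lemma integral_pow_four_gaussianReal (v : ℝ≥0) :
    ∫ x, x ^ 4 ∂gaussianReal 0 v = 3 * (v : ℝ) ^ 2 := by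
  set f : ℝ → ℝ := fun t ↦ Real.exp (v * t ^ 2 / 2) with hf
  have hf' (t : ℝ) : HasDerivAt f (v * t * f t) t := by
    convert (((hasDerivAt_pow 2 t).const_mul (v : ℝ)).div_const 2).exp using 1
    simp only [hf]
    ring
  have deriv_mul_f (a a' : ℝ → ℝ) (ha : ∀ t, HasDerivAt a (a' t) t) :
      deriv (fun t ↦ a t * f t) = fun t ↦ (a' t + v * t * a t) * f t := by
    ext t
    rw [((ha t).fun_mul (hf' t)).deriv]
    ring
  have h1 : deriv f = fun t ↦ (v * t) * f t := by
    ext t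
    rw [(hf' t).deriv]
  have h2 : deriv (fun t ↦ (v * t) * f t) = fun t ↦ (v + v ^ 2 * t ^ 2) * f t := by
    rw [deriv_mul_f _ (fun _ ↦ v) fun t ↦ by simpa using (hasDerivAt_id t).const_mul (v : ℝ)]
    ext t
    ring
  have h3 : deriv (fun t ↦ (v + v ^ 2 * t ^ 2) * f t)
      = fun t ↦ (3 * v ^ 2 * t + v ^ 3 * t ^ 3) * f t := by
    rw [deriv_mul_f _ (fun t ↦ v ^ 2 * (2 * t)) fun t ↦ by
      simpa using ((hasDerivAt_pow 2 t).const_mul ((v : ℝ) ^ 2)).const_add (v : ℝ)]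
    ext t
    ring
  have h4 : deriv (fun t ↦ (3 * v ^ 2 * t + v ^ 3 * t ^ 3) * f t) 0 = 3 * (v : ℝ) ^ 2 := by
    rw [deriv_mul_f _ (fun t ↦ 3 * v ^ 2 + v ^ 3 * (3 * t ^ 2)) fun t ↦ by
      simpa using ((hasDerivAt_id t).const_mul (3 * (v : ℝ) ^ 2)).fun_add
        ((hasDerivAt_pow 3 t).const_mul ((v : ℝ) ^ 3))]
    simp [hf]
  calc ∫ x, x ^ 4 ∂gaussianReal 0 v
      = iteratedDeriv 4 (mgf (fun x ↦ x) (gaussianReal 0 v)) 0 := by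
        rw [iteratedDeriv_mgf_zero] <;> simp
    _ = 3 * (v : ℝ) ^ 2 := by
        rw [mgf_fun_id_gaussianReal]
        simp only [zero_mul, zero_add]
        rw [iteratedDeriv_succ, iteratedDeriv_succ', iteratedDeriv_succ', iteratedDeriv_one,
          h1, h2, h3, h4]

lemma exists_singleton_or_pairing {ι : Type*} (p q r s : ι) :
    (p ≠ q ∧ p ≠ r ∧ p ≠ s) ∨ (q ≠ p ∧ q ≠ r ∧ q ≠ s) ∨ (r ≠ p ∧ r ≠ q ∧ r ≠ s) ∨
      (s ≠ p ∧ s ≠ q ∧ s ≠ r) ∨ (q = p ∧ r = p ∧ s = p) ∨ (q = p ∧ s = r ∧ p ≠ r) ∨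
      (r = p ∧ s = q ∧ p ≠ q) ∨ (s = p ∧ r = q ∧ p ≠ q) := by
  grind

def pairingCount {ι : Type*} [DecidableEq ι] (p q r s : ι) : ℕ :=
  (if p = q ∧ r = s then 1 else 0) + (if p = r ∧ q = s then 1 else 0) +
    (if p = s ∧ q = r then 1 else 0)

section IndependentFamily

variable {Ω ι : Type*} [MeasurableSpace Ω] {μ : Measure Ω}

lemma ProbabilityTheory.HasLaw.integral_pow {Y : Ω → ℝ} {ν : Measure ℝ} (hY : HasLaw Y ν μ)
    (k : ℕ) : ∫ ω, Y ω ^ k ∂μ = ∫ x, x ^ k ∂ν :=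
  hY.integral_comp (measurable_id.pow_const k).aestronglyMeasurable

lemma integrable_mul_mul_mul_of_memLp {f g h k : Ω → ℝ} (hf : MemLp f 4 μ) (hg : MemLp g 4 μ)
    (hh : MemLp h 4 μ) (hk : MemLp k 4 μ) : Integrable (fun ω ↦ f ω * g ω * h ω * k ω) μ := by
  have hprod := MemLp.prod' (s := Finset.univ) (f := ![f, g, h, k]) (p := fun _ ↦ 4) (μ := μ)
    (by simp [Fin.forall_fin_succ, hf, hg, hh, hk])
  rw [← memLp_one_iff_integrable]
  convert hprod using 1
  · simp [Fin.prod_univ_four]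
  · simp [ENNReal.mul_inv_cancel]

variable {X : ι → Ω → ℝ} {v : ℝ≥0}

namespace ProbabilityTheory.iIndepFun

lemma integral_pow_mul_pow (hX : iIndepFun X μ) (hXm : ∀ i, AEMeasurable (X i) μ) {p q : ι}
    (hpq : p ≠ q) (a b : ℕ) :
    ∫ ω, X p ω ^ a * X q ω ^ b ∂μ = (∫ ω, X p ω ^ a ∂μ) * ∫ ω, X q ω ^ b ∂μ :=
  ((hX.indepFun hpq).comp (measurable_id.pow_const a) (measurable_id.pow_const b))
    |>.integral_fun_mul_eq_mul_integral ((hXm p).pow_const a).aestronglyMeasurable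
      ((hXm q).pow_const b).aestronglyMeasurable

lemma integral_mul_mul_mul_eq_zero (hX : iIndepFun X μ) (hXm : ∀ i, AEMeasurable (X i) μ)
    {p q r s : ι} (hp : ∫ ω, X p ω ∂μ = 0) (hpq : p ≠ q) (hpr : p ≠ r) (hps : p ≠ s) :
    ∫ ω, X p ω * (X q ω * (X r ω * X s ω)) ∂μ = 0 := by
  classical
  have hind := (hX.indepFun_finset₀ {p} {q, r, s} (by simp [hpq, hpr, hps]) hXm).comp
    (measurable_pi_apply (⟨p, by simp⟩ : ({p} : Finset ι)))
    (show Measurable fun x : ({q, r, s} : Finset ι) → ℝ ↦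
      x ⟨q, by simp⟩ * (x ⟨r, by simp⟩ * x ⟨s, by simp⟩) by fun_prop)
  refine (hind.integral_fun_mul_eq_mul_integral (hXm p).aestronglyMeasurable
    ((hXm q).mul ((hXm r).mul (hXm s))).aestronglyMeasurable).trans ?_
  simp [hp]

end ProbabilityTheory.iIndepFun

theorem integral_mul_mul_mul_of_iIndepFun_gaussianReal [DecidableEq ι] (hX : iIndepFun X μ)
    (hXg : ∀ i, HasLaw (X i) (gaussianReal 0 v) μ) (p q r s : ι) :
    ∫ ω, X p ω * X q ω * X r ω * X s ω ∂μ = v ^ 2 * pairingCount p q r s := by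
  have hXm i : AEMeasurable (X i) μ := (hXg i).aemeasurable
  have hmean i : ∫ ω, X i ω ∂μ = 0 := by simp [(hXg i).integral_eq]
  have hvar i : ∫ ω, X i ω ^ 2 ∂μ = v := by rw [(hXg i).integral_pow, integral_sq_gaussianReal]
  have hsingle {p q r s : ι} (hpq : p ≠ q) (hpr : p ≠ r) (hps : p ≠ s) :=
    hX.integral_mul_mul_mul_eq_zero hXm (hmean p) hpq hpr hps
  rcases exists_singleton_or_pairing p q r s with
    ⟨hpq, hpr, hps⟩ | ⟨hqp, hqr, hqs⟩ | ⟨hrp, hrq, hrs⟩ | ⟨hsp, hsq, hsr⟩ |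
      ⟨rfl, rfl, rfl⟩ | ⟨rfl, rfl, hpr⟩ | ⟨rfl, rfl, hpq⟩ | ⟨rfl, rfl, hpq⟩
  · simp_rw [mul_assoc, hsingle hpq hpr hps]
    simp [pairingCount, hpq, hpr, hps]
  · simp_rw [mul_assoc, mul_left_comm (X p _) (X q _), hsingle hqp hqr hqs]
    simp [pairingCount, hqp.symm, hqr, hqs]
  · simp_rw [mul_assoc, mul_left_comm (X q _) (X r _), mul_left_comm (X p _) (X r _),
      hsingle hrp hrq hrs]
    simp [pairingCount, hrp.symm, hrq.symm, hrs]
  · simp_rw [mul_assoc, mul_comm (X r _) (X s _), mul_left_comm (X q _) (X s _),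
      mul_left_comm (X p _) (X s _), hsingle hsp hsq hsr]
    simp [pairingCount, hsp.symm, hsq.symm, hsr.symm]
  · simp_rw [show ∀ x : ℝ, x * x * x * x = x ^ 4 by intro; ring, (hXg _).integral_pow,
      integral_pow_four_gaussianReal]
    simp [pairingCount, mul_comm]
  · simp_rw [show ∀ x y : ℝ, x * x * y * y = x ^ 2 * y ^ 2 by intros; ring,
      hX.integral_pow_mul_pow hXm hpr, hvar]
    simp [pairingCount, hpr, sq]
  · simp_rw [show ∀ x y : ℝ, x * y * x * y = x ^ 2 * y ^ 2 by intros; ring,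
      hX.integral_pow_mul_pow hXm hpq, hvar]
    simp [pairingCount, hpq, sq]
  · simp_rw [show ∀ x y : ℝ, x * y * y * x = x ^ 2 * y ^ 2 by intros; ring,
      hX.integral_pow_mul_pow hXm hpq, hvar]
    simp [pairingCount, hpq, sq]

end IndependentFamily

namespace Matrix

variable {R : Type*} [CommSemiring R]

theorem mul_mul_apply_eq_sum {l m n o : Type*} [Fintype m] [Fintype n]
    (X : Matrix l m R) (A : Matrix m n R) (Y : Matrix n o R) (i : l) (k : o) :
    (X * A * Y) i k = ∑ a : m × n, A a.1 a.2 * (X i a.1 * Y a.2 k) := by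
  simp only [mul_apply, Finset.sum_mul, Fintype.sum_prod_type]
  rw [Finset.sum_comm]
  exact Finset.sum_congr rfl fun _ _ => Finset.sum_congr rfl fun _ _ => by ring

theorem mul_mul_mul_mul_mul_mul_apply_eq_sum {l m n o p q r s : Type*} [Fintype m] [Fintype n]
    [Fintype o] [Fintype p] [Fintype q] [Fintype r]
    (X : Matrix l m R) (A : Matrix m n R) (Y : Matrix n o R) (B : Matrix o p R)
    (Z : Matrix p q R) (C : Matrix q r R) (W : Matrix r s R) (i : l) (j : s) :
    (X * A * Y * B * Z * C * W) i j = ∑ t : (m × n) × (o × p) × (q × r),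
      A t.1.1 t.1.2 * B t.2.1.1 t.2.1.2 * C t.2.2.1 t.2.2.2 *
        (X i t.1.1 * Y t.1.2 t.2.1.1 * Z t.2.1.2 t.2.2.1 * W t.2.2.2 j) := by
  simp only [mul_mul_apply_eq_sum (X * A * Y * B * Z), mul_mul_apply_eq_sum (X * A * Y),
    mul_mul_apply_eq_sum X, Finset.sum_mul, Finset.mul_sum]
  rw [Finset.sum_comm_cycle, eq_comm, Fintype.sum_prod_type]
  refine Finset.sum_congr rfl fun a _ => ?_
  rw [Fintype.sum_prod_type, Finset.sum_comm]
  exact Finset.sum_congr rfl fun b _ => Finset.sum_congr rfl fun c _ => by ring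

theorem sum_mul_pairingCount {m n : Type*} [Fintype m] [Fintype n] [DecidableEq m]
    [DecidableEq n] (A B C : Matrix n m R) (i : m) (j : n) :
    ∑ t : (n × m) × (n × m) × (n × m), A t.1.1 t.1.2 * B t.2.1.1 t.2.1.2 * C t.2.2.1 t.2.2.2 *
      pairingCount (i, t.1.1) (t.1.2, t.2.1.1) (t.2.1.2, t.2.2.1) (t.2.2.2, j)
    = (Aᵀ * B * Cᵀ) i j + (A * Cᵀ).trace * Bᵀ i j + (Cᵀ * B * Aᵀ) i j := by
  simp only [pairingCount, Nat.cast_add, Nat.cast_ite, Nat.cast_one, Nat.cast_zero, mul_add,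
    Finset.sum_add_distrib, mul_ite, mul_one, mul_zero, Prod.mk.injEq, ite_and,
    Fintype.sum_prod_type, Finset.sum_ite_irrel, Finset.sum_ite_eq, Finset.sum_ite_eq',
    Finset.mem_univ, if_true, Finset.sum_const_zero, mul_apply, transpose_apply, trace, diag_apply,
    Finset.sum_mul]
  congr 1
  congr 1
  · exact Finset.sum_comm
  · exact Finset.sum_congr rfl fun _ _ => Finset.sum_congr rfl fun _ _ => by ring
  · exact Finset.sum_congr rfl fun _ _ => Finset.sum_congr rfl fun _ _ => by ring

end Matrix

theorem gaussian_expectation_fourth_8_general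
    {Ω : Type*} [MeasurableSpace Ω] (μ : Measure Ω)
    {n₁ n₂ : ℕ} (σ : ℝ)
    (E : Ω → Matrix (Fin n₁) (Fin n₂) ℝ)
    (hmeas : ∀ i j, Measurable fun ω => E ω i j)
    (hindep : iIndepFun
      (fun p : Fin n₁ × Fin n₂ => fun ω => E ω p.1 p.2) μ)
    (hgauss : ∀ i j, Measure.map (fun ω => E ω i j) μ
      = gaussianReal 0 (Real.toNNReal (σ ^ 2)))
    (A B C : Matrix (Fin n₂) (Fin n₁) ℝ) :
    ∀ i j, ∫ ω, (E ω * A * E ω * B * E ω * C * E ω) i j ∂μ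
      = σ ^ 4 * (Aᵀ * B * Cᵀ) i j
        + σ ^ 4 * (A * Cᵀ).trace * Bᵀ i j
        + σ ^ 4 * (Cᵀ * B * Aᵀ) i j := by
  intro i j
  have hlaw (p : Fin n₁ × Fin n₂) :
      HasLaw (fun ω ↦ E ω p.1 p.2) (gaussianReal 0 (σ ^ 2).toNNReal) μ :=
    ⟨(hmeas p.1 p.2).aemeasurable, hgauss p.1 p.2⟩
  have hmemLp (p : Fin n₁ × Fin n₂) : MemLp (fun ω ↦ E ω p.1 p.2) 4 μ :=
    (hlaw p).hasGaussianLaw.memLp (by norm_num)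
  have hv : ((σ ^ 2).toNNReal : ℝ) = σ ^ 2 := Real.coe_toNNReal _ (sq_nonneg σ)
  have hwick (t : (Fin n₂ × Fin n₁) × (Fin n₂ × Fin n₁) × (Fin n₂ × Fin n₁)) :=
    integral_mul_mul_mul_of_iIndepFun_gaussianReal hindep hlaw
      (i, t.1.1) (t.1.2, t.2.1.1) (t.2.1.2, t.2.2.1) (t.2.2.2, j)
  dsimp only at hwick
  simp_rw [mul_mul_mul_mul_mul_mul_apply_eq_sum]
  rw [integral_finsetSum _ fun t _ ↦ ?integrable]
  case integrable =>
    exact (integrable_mul_mul_mul_of_memLp (hmemLp (i, t.1.1)) (hmemLp (t.1.2, t.2.1.1))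
      (hmemLp (t.2.1.2, t.2.2.1)) (hmemLp (t.2.2.2, j))).const_mul _
  simp_rw [integral_const_mul, hwick, hv, mul_left_comm _ ((σ ^ 2) ^ 2 : ℝ), ← Finset.mul_sum,
    sum_mul_pairingCount]
  ring

/-- if `E` is an `n₁ × n₂` random matrix with i.i.d. mean-zero Gaussian
entries of variance `σ²`, then for deterministic `A, B, C ∈ ℝ^{n₂ × n₁}`,
`𝔼[E A E B E C E] = σ⁴ Aᵀ B Cᵀ + σ⁴ Tr(A Cᵀ) Bᵀ + σ⁴ Cᵀ B Aᵀ`. -/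
theorem gaussian_expectation_fourth_8
    {Ω : Type*} [MeasurableSpace Ω] (μ : Measure Ω) [IsProbabilityMeasure μ]
    {n₁ n₂ : ℕ} (σ : ℝ) (hσ : 0 < σ)
    (E : Ω → Matrix (Fin n₁) (Fin n₂) ℝ)
    (hmeas : ∀ i j, Measurable fun ω => E ω i j)
    (hindep : iIndepFun
      (fun p : Fin n₁ × Fin n₂ => fun ω => E ω p.1 p.2) μ)
    (hgauss : ∀ i j, Measure.map (fun ω => E ω i j) μ
      = gaussianReal 0 (Real.toNNReal (σ ^ 2)))
    (A B C : Matrix (Fin n₂) (Fin n₁) ℝ) :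
    ∀ i j, ∫ ω, (E ω * A * E ω * B * E ω * C * E ω) i j ∂μ
      = σ ^ 4 * (Aᵀ * B * Cᵀ) i j
        + σ ^ 4 * (A * Cᵀ).trace * Bᵀ i j
        + σ ^ 4 * (Cᵀ * B * Aᵀ) i j :=
  gaussian_expectation_fourth_8_general μ σ E hmeas hindep hgauss A B C
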